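/- There exists a subset S ⊆ W such that d(S, G_1) = d(S, G_2) and d(S, G_1) + d(S, G_2) ≥ (k − 1)/2 if and only if H contains a k-clique. -/

import Mathlib

/-- Number of edges of `G` with both endpoints in `S`. -/
noncomputable def edgeCnt {W : Type*} (G : SimpleGraph W) (S : Finset W) : ℕ :=
  {e ∈ G.edgeSet | ∀ v ∈ e, v ∈ S}.ncard

/-- Density of the subgraph induced by `S` in `G`. -/
noncomputable def dens {W : Type*} (G : SimpleGraph W) (S : Finset W) : ℝ :=
  (edgeCnt G S : ℝ) / (S.card : ℝ)

/-- The first snapshot: a copy of `H` on the `inl` vertices, the `k` new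
vertices being isolated. -/
def G1 {VH : Type*} (H : SimpleGraph VH) (k : ℕ) : SimpleGraph (VH ⊕ Fin k) :=
  SimpleGraph.fromRel (fun a b => ∃ u v, a = Sum.inl u ∧ b = Sum.inl v ∧ H.Adj u v)

/-- The second snapshot: a `k`-clique on the `inr` vertices, the vertices of
`VH` being isolated. -/
def G2 (VH : Type*) (k : ℕ) : SimpleGraph (VH ⊕ Fin k) :=
  SimpleGraph.fromRel (fun a b => ∃ i j : Fin k, a = Sum.inr i ∧ b = Sum.inr j)

/-! If `S` satisfies both conditions, the two graphs have the same number `m` of edges in `S`.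
Writing `l` and `r` for the numbers of old and new vertices in `S`, we have `m = C(r, 2)` and
`m ≤ C(l, 2)`, so `r ≤ l`; then `2m / (l + r) ≥ (k - 1) / 2` together with `r ≤ k` forces
`l = r = k`, and the `k` old vertices span `C(k, 2)` edges of `H`, i.e. they form a `k`-clique.
Conversely, a `k`-clique of `H` together with the `k` new vertices is such an `S`. -/

open scoped Finset

namespace SimpleGraph

variable {V : Type*} [Finite V]

variable (V) in
lemma ncard_edgeSet_top : (⊤ : SimpleGraph V).edgeSet.ncard = (Nat.card V).choose 2 := by
  classical
  have := Fintype.ofFinite V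
  rw [Set.ncard_eq_toFinset_card', ← edgeFinset, card_edgeFinset_top_eq_card_choose_two,
    Nat.card_eq_fintype_card]

lemma ncard_edgeSet_le_card_choose_two (G : SimpleGraph V) :
    G.edgeSet.ncard ≤ (Nat.card V).choose 2 :=
  ncard_edgeSet_top V ▸ Set.ncard_le_ncard (edgeSet_mono le_top) (Set.toFinite _)

lemma ncard_edgeSet_eq_card_choose_two_iff {G : SimpleGraph V} :
    G.edgeSet.ncard = (Nat.card V).choose 2 ↔ G = ⊤ := by
  refine ⟨fun h => ?_, fun h => h ▸ ncard_edgeSet_top V⟩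
  by_contra hG
  have := Set.ncard_lt_ncard (edgeSet_strict_mono (lt_top_iff_ne_top.2 hG)) (Set.toFinite _)
  rw [ncard_edgeSet_top] at this
  omega

end SimpleGraph

section edgeCnt

variable {V W : Type*}

lemma edgeCnt_eq_ncard_edgeSet_induce (G : SimpleGraph W) (S : Finset W) :
    edgeCnt G S = (G.induce (S : Set W)).edgeSet.ncard := by
  rw [edgeCnt, ← Set.ncard_image_of_injective _
    (Function.Embedding.subtype (· ∈ (S : Set W))).sym2Map.injective]
  congr 1
  ext e
  induction e with
  | _ a b => aesop (add simp [Sym2.exists, Sym2.forall, SimpleGraph.adj_comm])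

lemma edgeCnt_map (f : V ↪ W) (G : SimpleGraph V) (S : Finset W) :
    edgeCnt (G.map f) S = edgeCnt G (S.preimage f f.injective.injOn) := by
  rw [edgeCnt, edgeCnt, SimpleGraph.edgeSet_map,
    ← Set.ncard_image_of_injective _ f.sym2Map.injective]
  congr 1
  ext e
  induction e with
  | _ a b => aesop (add simp [Sym2.exists, Sym2.forall])

lemma edgeCnt_le_card_choose_two (G : SimpleGraph W) (S : Finset W) :
    edgeCnt G S ≤ (#S).choose 2 := by
  rw [edgeCnt_eq_ncard_edgeSet_induce]
  simpa using (G.induce (S : Set W)).ncard_edgeSet_le_card_choose_two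

lemma edgeCnt_eq_card_choose_two_iff {G : SimpleGraph W} {S : Finset W} :
    edgeCnt G S = (#S).choose 2 ↔ G.IsClique (S : Set W) := by
  rw [edgeCnt_eq_ncard_edgeSet_induce, ← SimpleGraph.induce_eq_top,
    ← SimpleGraph.ncard_edgeSet_eq_card_choose_two_iff]
  simp

lemma dens_eq_and_le_add_iff {G G' : SimpleGraph W} {S : Finset W} {c : ℝ} (hc : 0 < c) :
    dens G S = dens G' S ∧ c ≤ dens G S + dens G' S ↔
      S.Nonempty ∧ edgeCnt G S = edgeCnt G' S ∧ c * #S ≤ 2 * edgeCnt G' S := by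
  rcases S.eq_empty_or_nonempty with rfl | hS
  · simp [dens, hc.not_ge]
  have hcard : (0 : ℝ) < #S := by exact_mod_cast hS.card_pos
  rw [dens, dens, div_left_inj' hcard.ne', Nat.cast_inj, ← add_div, le_div_iff₀ hcard]
  constructor
  · rintro ⟨h, hle⟩
    exact ⟨hS, h, by rwa [h, ← two_mul] at hle⟩
  · rintro ⟨-, h, hle⟩
    exact ⟨h, by rwa [h, ← two_mul]⟩

end edgeCnt

lemma two_mul_choose_two (n : ℕ) : 2 * n.choose 2 = n * (n - 1) := by
  rw [Nat.choose_two_right, Nat.mul_div_cancel' (Nat.even_mul_pred_self n).two_dvd]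

lemma eq_of_choose_two_le_of_mul_le {k l r : ℕ} (hk : 2 ≤ k) (hrk : r ≤ k) (hpos : 0 < l + r)
    (hchoose : r.choose 2 ≤ l.choose 2) (hdens : (k - 1) * (l + r) ≤ 4 * r.choose 2) :
    l = k ∧ r = k := by
  have hdens' : (k - 1) * (l + r) ≤ (r - 1) * (2 * r) := by
    rw [show 4 * r.choose 2 = 2 * (2 * r.choose 2) by ring, two_mul_choose_two] at hdens
    linarith
  have hr : 2 ≤ r := by
    by_contra! h
    have : 0 < (k - 1) * (l + r) := Nat.mul_pos (by omega) hpos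
    interval_cases r <;> simp at hdens' <;> omega
  have hrl : r ≤ l := by
    by_contra! h
    have := Nat.mul_lt_mul_of_le_of_lt h.le (show l - 1 < r - 1 by omega) (by omega)
    have := two_mul_choose_two l
    have := two_mul_choose_two r
    omega
  have hkr : k ≤ r := by
    have : (k - 1) * (2 * r) ≤ (r - 1) * (2 * r) :=
      le_trans (Nat.mul_le_mul_left _ (by omega)) hdens'
    have := Nat.le_of_mul_le_mul_right this (by omega)
    omega
  have hlk : l ≤ k := by
    have : (k - 1) * (l + k) ≤ (k - 1) * (2 * k) := by
      rw [show r = k by omega] at hdens'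
      linarith
    have := Nat.le_of_mul_le_mul_left this (by omega)
    omega
  omega

lemma G1_eq_map {VH : Type*} (H : SimpleGraph VH) (k : ℕ) :
    G1 H k = H.map Function.Embedding.inl := by
  ext a b
  simp only [G1, SimpleGraph.fromRel_adj, SimpleGraph.map_adj, Function.Embedding.inl_apply]
  constructor
  · rintro ⟨-, ⟨u, v, rfl, rfl, h⟩ | ⟨u, v, rfl, rfl, h⟩⟩
    exacts [⟨u, v, h, rfl, rfl⟩, ⟨v, u, h.symm, rfl, rfl⟩]
  · rintro ⟨u, v, h, rfl, rfl⟩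
    exact ⟨by simpa using h.ne, .inl ⟨u, v, rfl, rfl, h⟩⟩

lemma G2_eq_map (VH : Type*) (k : ℕ) :
    G2 VH k = (⊤ : SimpleGraph (Fin k)).map Function.Embedding.inr := by
  ext a b
  simp only [G2, SimpleGraph.fromRel_adj, SimpleGraph.map_adj, Function.Embedding.inr_apply,
    SimpleGraph.top_adj]
  constructor
  · rintro ⟨hne, ⟨i, j, rfl, rfl⟩ | ⟨i, j, rfl, rfl⟩⟩
    exacts [⟨i, j, by simpa using hne, rfl, rfl⟩, ⟨j, i, by simpa using hne, rfl, rfl⟩]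
  · rintro ⟨i, j, h, rfl, rfl⟩
    exact ⟨by simpa using h, .inl ⟨i, j, rfl, rfl⟩⟩

lemma edgeCnt_G1 {VH : Type*} (H : SimpleGraph VH) (k : ℕ) (S : Finset (VH ⊕ Fin k)) :
    edgeCnt (G1 H k) S = edgeCnt H S.toLeft := by
  rw [G1_eq_map, edgeCnt_map]
  congr 1
  ext
  simp

lemma edgeCnt_G2 (VH : Type*) (k : ℕ) (S : Finset (VH ⊕ Fin k)) :
    edgeCnt (G2 VH k) S = (#S.toRight).choose 2 := by
  rw [G2_eq_map, edgeCnt_map, edgeCnt_eq_card_choose_two_iff.2 fun _ _ _ _ => id]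
  congr 2
  ext
  simp

theorem stmt18_general {VH : Type*} [DecidableEq VH]
    (H : SimpleGraph VH) (k : ℕ) (hk : 2 ≤ k) :
    (∃ S : Finset (VH ⊕ Fin k),
        dens (G1 H k) S = dens (G2 VH k) S ∧
        ((k : ℝ) - 1) / 2 ≤ dens (G1 H k) S + dens (G2 VH k) S) ↔
    (∃ C : Finset VH, H.IsNClique k C) := by
  have hk' : (2 : ℝ) ≤ k := by exact_mod_cast hk
  simp_rw [dens_eq_and_le_add_iff (by linarith : (0 : ℝ) < ((k : ℝ) - 1) / 2), edgeCnt_G1,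
    edgeCnt_G2]
  constructor
  · rintro ⟨S, hS, hcnt, hle⟩
    have hcard := S.card_toLeft_add_card_toRight
    have hdens : (k - 1) * (#S.toLeft + #S.toRight) ≤ 4 * (#S.toRight).choose 2 := by
      rw [hcard, ← Nat.cast_le (α := ℝ)]
      push_cast [Nat.cast_sub (by omega : 1 ≤ k)]
      linarith
    obtain ⟨hl, hr⟩ := eq_of_choose_two_le_of_mul_le hk
      (by simpa using S.toRight.card_le_univ) (hcard ▸ hS.card_pos)
      (hcnt ▸ edgeCnt_le_card_choose_two H _) hdens
    exact ⟨S.toLeft, edgeCnt_eq_card_choose_two_iff.1 (by rw [hcnt, hl, hr]), hl⟩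
  · rintro ⟨C, hC, hCk⟩
    have hcnt : edgeCnt H C = k.choose 2 := hCk ▸ edgeCnt_eq_card_choose_two_iff.2 hC
    refine ⟨C.disjSum .univ, ⟨.inr ⟨0, by omega⟩, by simp⟩, by simp [hcnt], ?_⟩
    rw [Finset.toRight_disjSum, Finset.card_disjSum, Finset.card_univ, Fintype.card_fin, hCk]
    push_cast [Nat.cast_choose_two]
    nlinarith

theorem stmt18 {VH : Type*} [Fintype VH] [DecidableEq VH]
    (H : SimpleGraph VH) (k : ℕ) (hk : 2 ≤ k) :
    (∃ S : Finset (VH ⊕ Fin k),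
        dens (G1 H k) S = dens (G2 VH k) S ∧
        ((k : ℝ) - 1) / 2 ≤ dens (G1 H k) S + dens (G2 VH k) S) ↔
    (∃ C : Finset VH, H.IsNClique k C) :=
  stmt18_general H k hk
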